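/- Let A : ℝⁿ → Set ℝⁿ be partly smooth at x̄ relative to a manifold M given by a C^p patch through x̄, and let ū ∈ ri(A(x̄)). Let (x_k) be a sequence in M with x_k → x̄ and let u_k ∈ A(x_k) with u_k → ū. Then u_k ∈ ri(A(x_k)) for all sufficiently large k. -/

import Mathlib

open Filter Topology Set RealInnerProductSpace

noncomputable section

/-- A set-valued operator `A` is upper semicontinuous: whenever `x k → x₀`,
`u k ∈ A (x k)` for all `k`, and `u k → u₀`, then `u₀ ∈ A x₀`. -/
def UpperSC {E : Type*} [NormedAddCommGroup E] [InnerProductSpace ℝ E]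
    (A : E → Set E) : Prop :=
  ∀ (x u : ℕ → E) (x₀ u₀ : E),
    Tendsto x atTop (𝓝 x₀) → (∀ k, u k ∈ A (x k)) → Tendsto u atTop (𝓝 u₀) →
      u₀ ∈ A x₀

/-- `A` is lower semicontinuous along `S` at `x₀ ∈ S`. -/
def LowerSCAlongAt {E : Type*} [NormedAddCommGroup E] [InnerProductSpace ℝ E]
    (A : E → Set E) (S : Set E) (x₀ : E) : Prop :=
  ∀ u₀ ∈ A x₀, ∀ x : ℕ → E, (∀ k, x k ∈ S) → Tendsto x atTop (𝓝 x₀) →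
    ∃ u : ℕ → E, (∀ k, u k ∈ A (x k)) ∧ Tendsto u atTop (𝓝 u₀)

/-- `A` is continuous along `S` near `xbar`: lower semicontinuous along `S` at every
point of `S` in some neighborhood of `xbar`. -/
def ContinuousAlongNear {E : Type*} [NormedAddCommGroup E] [InnerProductSpace ℝ E]
    (A : E → Set E) (S : Set E) (xbar : E) : Prop :=
  ∃ W ∈ 𝓝 xbar, ∀ x ∈ S ∩ W, LowerSCAlongAt A S x

/-- A `C^p` patch (local parametrization) of a manifold `M ⊆ E` through `xbar`,
with parameter domain `F` (playing the role of `ℝ^d`). -/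
structure CpPatch (p : ℕ∞) (F : Type*) [NormedAddCommGroup F] [InnerProductSpace ℝ F]
    {E : Type*} [NormedAddCommGroup E] [InnerProductSpace ℝ E]
    (M : Set E) (xbar : E) where
  V : Set F
  toFun : F → E
  isOpen_V : IsOpen V
  zero_mem : (0 : F) ∈ V
  contDiffOn : ContDiffOn ℝ p toFun V
  injOn : Set.InjOn toFun V
  fderiv_injective : ∀ t ∈ V, Function.Injective (fderiv ℝ toFun t)
  map_zero : toFun 0 = xbar
  image_eq : M = toFun '' V

namespace CpPatch

variable {p : ℕ∞} {F : Type*} [NormedAddCommGroup F] [InnerProductSpace ℝ F]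
  {E : Type*} [NormedAddCommGroup E] [InnerProductSpace ℝ E] {M : Set E} {xbar : E}

/-- The tangent space `T_M(x) = range (Dφ(t))` where `x = φ(t)`, `t ∈ V`. -/
def tangent (P : CpPatch p F M xbar) (x : E) : Submodule ℝ E :=
  haveI : Nonempty F := ⟨0⟩
  LinearMap.range ((fderiv ℝ P.toFun (Function.invFunOn P.toFun P.V x) : F →ₗ[ℝ] E))

/-- The normal space `N_M(x) = (T_M(x))ᗮ`. -/
def normal (P : CpPatch p F M xbar) (x : E) : Submodule ℝ E :=
  (P.tangent x)ᗮ

end CpPatch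

/-- `Lin S`: the direction of the affine span of `S`. -/
def Lin {E : Type*} [NormedAddCommGroup E] [InnerProductSpace ℝ E] (S : Set E) :
    Submodule ℝ E :=
  (affineSpan ℝ S).direction

/-- `A` is partly smooth at `xbar` relative to `M` (given by the `C^p` patch `P`). -/
def PartlySmoothAt {p : ℕ∞} {F : Type*} [NormedAddCommGroup F] [InnerProductSpace ℝ F]
    {E : Type*} [NormedAddCommGroup E] [InnerProductSpace ℝ E] [FiniteDimensional ℝ E]
    (A : E → Set E) (M : Set E) (xbar : E) (P : CpPatch p F M xbar) : Prop :=
  UpperSC A ∧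
  -- Regularity
  (∃ W ∈ 𝓝 xbar, ∀ x ∈ W, (A x).Nonempty ∧ IsClosed (A x) ∧ Convex ℝ (A x)) ∧
  -- Sharpness
  P.normal xbar = Lin (A xbar) ∧
  (∃ η : E → E, ∃ W ∈ 𝓝 xbar, ContinuousOn η (M ∩ W) ∧
    ∀ x ∈ M ∩ W,
      (fun v => ((P.tangent x).orthogonalProjectionOnto v : E)) '' A x = {η x}) ∧
  -- Continuity
  ContinuousAlongNear A M xbar

/-- The `ε`-localization of `A` around `(xbar, ubar)`. -/
def Locz {E : Type*} [NormedAddCommGroup E] [InnerProductSpace ℝ E]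
    (A : E → Set E) (xbar ubar : E) (ε : ℝ) (x : E) : Set E :=
  if ‖x - xbar‖ < ε then {u ∈ A x | ‖u - ubar‖ < ε} else ∅

/-- `A` is `r`-resolvent-regular at `xbar` for `ubar`, with constants `r > 0`, `ε > 0`. -/
def ResolventRegular {E : Type*} [NormedAddCommGroup E] [InnerProductSpace ℝ E]
    (A : E → Set E) (xbar ubar : E) (r ε : ℝ) : Prop :=
  0 < r ∧ 0 < ε ∧
  (∀ x y u v : E, u ∈ Locz A xbar ubar ε x → v ∈ Locz A xbar ubar ε y →
    (inner ℝ (x - y) (u - v) : ℝ) ≥ -r * ‖x - y‖ ^ 2) ∧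
  (∀ γ : ℝ, 0 < γ → γ < 1 / r →
    ∃ W ∈ 𝓝 (xbar + γ • ubar), ∃ J : E → E, ContinuousOn J W ∧
      ∀ z ∈ W, ∀ x : E,
        (∃ u ∈ Locz A xbar ubar ε x, z = x + γ • u) ↔ x = J z)

/-- The local union `U_{γ,ε} = ⋃_{x ∈ M, ‖x-x̄‖<ε} (x + γ A_ε(x))`. -/
def LocalUnion {E : Type*} [NormedAddCommGroup E] [InnerProductSpace ℝ E]
    (A : E → Set E) (M : Set E) (xbar ubar : E) (γ ε : ℝ) : Set E :=
  {z | ∃ x ∈ M, ‖x - xbar‖ < ε ∧ ∃ u ∈ Locz A xbar ubar ε x, z = x + γ • u}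


/-!
If `u k ∉ ri (A (x k))` along a subsequence, separation inside `Lin (A (x k))` gives unit
vectors `z k ∈ Lin (A (x k))` with `⟪z k, w - u k⟫ ≤ 0` on `A (x k)`; pass to a limit `z₀`.
Lower semicontinuity along `M` keeps `⟪z₀, w - ubar⟫ ≤ 0` on `A xbar`. Sharpness bounds
`dim Lin (A (x k)) ≤ dim N_M(x k) = dim N_M(xbar) = dim Lin (A xbar)`, while lower
semicontinuity makes a basis of `Lin (A xbar)` a limit of independent families in
`Lin (A (x k))`; these then span `Lin (A (x k))`, so `z₀ ∈ Lin (A xbar)`. A nonzero vector of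
`Lin (A xbar)` supporting `A xbar` at `ubar` contradicts `ubar ∈ ri (A xbar)`.
-/

open Module Submodule

section ConvexSeparation

variable {E : Type*} [NormedAddCommGroup E] [InnerProductSpace ℝ E]

theorem exists_norm_eq_one_inner_sub_nonpos_of_notMem_intrinsicInterior
    [FiniteDimensional ℝ E] {s : Set E} (hs : Convex ℝ s) {a : E} (ha : a ∈ s)
    (hri : a ∉ intrinsicInterior ℝ s) :
    ∃ z ∈ (affineSpan ℝ s).direction, ‖z‖ = 1 ∧ ∀ w ∈ s, ⟪z, w - a⟫ ≤ 0 := by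
  -- pulled back to `D` by `v ↦ v + a`, `s` has nonempty interior, so Hahn–Banach applies in `D`
  set D := (affineSpan ℝ s).direction
  let a' : affineSpan ℝ s := ⟨a, subset_affineSpan ℝ s ha⟩
  have : Nonempty (affineSpan ℝ s) := ⟨a'⟩
  let φ := AffineIsometryEquiv.vaddConst ℝ a'
  set t : Set D := φ ⁻¹' ((↑) ⁻¹' s)
  have ht : Convex ℝ t :=
    hs.affine_preimage ((affineSpan ℝ s).subtype.comp φ.toAffineEquiv.toAffineMap)
  have hint : interior t = φ ⁻¹' interior ((↑) ⁻¹' s) :=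
    (φ.toHomeomorph.preimage_interior _).symm
  have ht_int : (interior t).Nonempty := by
    obtain ⟨-, ⟨b, hb, rfl⟩⟩ := (intrinsicInterior_nonempty hs).2 ⟨a, ha⟩
    exact ⟨φ.symm b, by rwa [hint, mem_preimage, φ.apply_symm_apply]⟩
  have h0 : (0 : D) ∉ interior t := by
    rw [hint]
    exact fun h => hri ⟨_, h, by simp [φ, a']⟩
  obtain ⟨f, hf0, hf⟩ := geometric_hahn_banach_of_nonempty_interior_point ht h0 ht_int
  set g : D := (InnerProductSpace.toDual ℝ D).symm f
  have hg : (g : E) ≠ 0 := by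
    simpa [g] using hf0
  refine ⟨‖(g : E)‖⁻¹ • (g : E), D.smul_mem _ g.2, norm_smul_inv_norm hg, fun w hw => ?_⟩
  have hwa : w - a ∈ D := by
    rw [← vsub_eq_sub]
    exact AffineSubspace.vsub_mem_direction (subset_affineSpan ℝ s hw) a'.2
  have hfw : f ⟨w - a, hwa⟩ ≤ 0 := by
    simpa using hf ⟨w - a, hwa⟩ (by simpa [t, φ, a'] using hw)
  have hgw : ⟪(g : E), w - a⟫ = f ⟨w - a, hwa⟩ :=
    (Submodule.coe_inner D g ⟨w - a, hwa⟩).symm.trans InnerProductSpace.toDual_symm_apply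
  rw [real_inner_smul_left, hgw]
  exact mul_nonpos_of_nonneg_of_nonpos (by positivity) hfw

theorem eq_zero_of_inner_sub_nonpos_of_mem_intrinsicInterior {s : Set E} {a z : E}
    (ha : a ∈ intrinsicInterior ℝ s) (hz : z ∈ (affineSpan ℝ s).direction)
    (h : ∀ w ∈ s, ⟪z, w - a⟫ ≤ 0) : z = 0 := by
  obtain ⟨p, hp, rfl⟩ := ha
  let γ : ℝ → affineSpan ℝ s := fun ε =>
    ⟨ε • z + p, AffineSubspace.vadd_mem_of_mem_direction (Submodule.smul_mem _ ε hz) p.2⟩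
  have hγ : Continuous γ :=
    (by fun_prop : Continuous fun ε : ℝ => ε • z + (p : E)).subtype_mk _
  have hγ0 : γ 0 = p := by simp [γ]
  have hγs : ∀ᶠ ε : ℝ in 𝓝 0, γ ε ∈ ((↑) ⁻¹' s : Set (affineSpan ℝ s)) :=
    (hγ.tendsto 0).eventually_mem (hγ0 ▸ mem_interior_iff_mem_nhds.1 hp)
  obtain ⟨ε, hεs, hε⟩ := ((hγs.filter_mono nhdsWithin_le_nhds).and
    (self_mem_nhdsWithin : ∀ᶠ ε in 𝓝[>] (0 : ℝ), 0 < ε)).exists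
  have := h _ hεs
  rw [add_sub_cancel_right, real_inner_smul_right, real_inner_self_eq_norm_sq] at this
  have : ‖z‖ ^ 2 ≤ 0 := nonpos_of_mul_nonpos_right this hε
  simpa using this

end ConvexSeparation

section SubspaceLimits

variable {E : Type*} [NormedAddCommGroup E] [NormedSpace ℝ E]

theorem mem_span_of_tendsto_of_linearIndependent {m : ℕ} {v : ℕ → Fin m → E} {w : Fin m → E}
    (hw : LinearIndependent ℝ w) (hv : Tendsto v atTop (𝓝 w)) {z : ℕ → E} {z₀ : E}
    (hz : Tendsto z atTop (𝓝 z₀)) (hmem : ∀ᶠ k in atTop, z k ∈ span ℝ (range (v k))) :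
    z₀ ∈ span ℝ (range w) := by
  by_contra hz₀
  -- linear independence is an open condition
  have hli : ∀ᶠ k in atTop, LinearIndependent ℝ (Fin.cons (z k) (v k) : Fin (m + 1) → E) :=
    (hz.finCons hv).eventually (linearIndependent_finCons.2 ⟨hw, hz₀⟩).eventually
  obtain ⟨k, hk, hzk⟩ := (hli.and hmem).exists
  exact (linearIndependent_finCons.1 hk).2 hzk

theorem mem_of_tendsto_of_finrank_le [FiniteDimensional ℝ E] {S : ℕ → Submodule ℝ E}
    {L : Submodule ℝ E} (hdim : ∀ᶠ k in atTop, finrank ℝ (S k) ≤ finrank ℝ L)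
    (happrox : ∀ w ∈ L, ∃ s : ℕ → E, (∀ k, s k ∈ S k) ∧ Tendsto s atTop (𝓝 w))
    {z : ℕ → E} {z₀ : E} (hz : ∀ k, z k ∈ S k) (hzt : Tendsto z atTop (𝓝 z₀)) : z₀ ∈ L := by
  let b := Module.finBasis ℝ L
  let w : Fin (finrank ℝ L) → E := fun i => b i
  have hw : LinearIndependent ℝ w := b.linearIndependent.map' L.subtype L.ker_subtype
  have hwL : span ℝ (range w) = L := by
    rw [show w = L.subtype ∘ b from rfl, range_comp, Submodule.span_image, b.span_eq,
      Submodule.map_top, Submodule.range_subtype]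
  choose s hsS hst using fun i => happrox (w i) (b i).2
  let v : ℕ → Fin (finrank ℝ L) → E := fun k i => s i k
  have hv : Tendsto v atTop (𝓝 w) := tendsto_pi_nhds.2 hst
  rw [← hwL]
  refine mem_span_of_tendsto_of_linearIndependent hw hv hzt ?_
  -- for large `k` the approximants `v k` of a basis of `L` are a basis of `S k`
  filter_upwards [hv.eventually hw.eventually, hdim] with k hvk hdimk
  have hle : span ℝ (range (v k)) ≤ S k := span_le.2 (range_subset_iff.2 fun i => hsS i k)
  have hfin : finrank ℝ (S k) ≤ finrank ℝ (span ℝ (range (v k))) := by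
    rwa [finrank_span_eq_card hvk, Fintype.card_fin]
  rw [Submodule.eq_of_le_of_finrank_le hle hfin]
  exact hz k

end SubspaceLimits

section OrthogonalProjection

variable {E : Type*} [NormedAddCommGroup E] [InnerProductSpace ℝ E]

theorem direction_affineSpan_le_orthogonal_of_subsingleton {K : Submodule ℝ E}
    [K.HasOrthogonalProjection] {s : Set E}
    (h : ((fun v => (K.orthogonalProjectionOnto v : E)) '' s).Subsingleton) :
    (affineSpan ℝ s).direction ≤ Kᗮ := by
  rw [direction_affineSpan, vectorSpan_def, span_le]
  rintro _ ⟨v, hv, w, hw, rfl⟩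
  change v - w ∈ Kᗮ
  rw [← orthogonalProjectionOnto_eq_zero_iff, map_sub, sub_eq_zero]
  exact Subtype.ext (h (mem_image_of_mem _ hv) (mem_image_of_mem _ hw))

end OrthogonalProjection

namespace CpPatch

variable {p : ℕ∞} {F : Type*} [NormedAddCommGroup F] [InnerProductSpace ℝ F]
  {E : Type*} [NormedAddCommGroup E] [InnerProductSpace ℝ E] {M : Set E} {xbar : E}

theorem base_mem (P : CpPatch p F M xbar) : xbar ∈ M := P.image_eq ▸ ⟨0, P.zero_mem, P.map_zero⟩

theorem finrank_tangent (P : CpPatch p F M xbar) {x : E} (hx : x ∈ M) :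
    finrank ℝ (P.tangent x) = finrank ℝ F := by
  have : Nonempty F := ⟨0⟩
  rw [P.image_eq] at hx
  exact LinearMap.finrank_range_of_inj (P.fderiv_injective _ (Function.invFunOn_mem hx))

theorem finrank_normal_eq [FiniteDimensional ℝ E] (P : CpPatch p F M xbar) {x y : E}
    (hx : x ∈ M) (hy : y ∈ M) : finrank ℝ (P.normal x) = finrank ℝ (P.normal y) := by
  have hx' := (P.tangent x).finrank_add_finrank_orthogonal
  have hy' := (P.tangent y).finrank_add_finrank_orthogonal
  rw [P.finrank_tangent hx] at hx'
  rw [P.finrank_tangent hy] at hy'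
  unfold normal
  omega

end CpPatch

namespace LowerSCAlongAt

variable {E : Type*} [NormedAddCommGroup E] [InnerProductSpace ℝ E] {A : E → Set E}
  {S : Set E} {x₀ : E} {x : ℕ → E}

theorem exists_tendsto_mem_Lin (hA : LowerSCAlongAt A S x₀) (hxS : ∀ k, x k ∈ S)
    (hx : Tendsto x atTop (𝓝 x₀)) {w : E} (hw : w ∈ Lin (A x₀)) :
    ∃ s : ℕ → E, (∀ k, s k ∈ Lin (A (x k))) ∧ Tendsto s atTop (𝓝 w) := by
  rw [Lin, direction_affineSpan, vectorSpan_def] at hw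
  induction hw using Submodule.span_induction with
  | mem _ h =>
    obtain ⟨a, ha, b, hb, rfl⟩ := h
    obtain ⟨sa, hsa, hsat⟩ := hA a ha x hxS hx
    obtain ⟨sb, hsb, hsbt⟩ := hA b hb x hxS hx
    refine ⟨fun k => sa k - sb k, fun k => ?_, hsat.sub hsbt⟩
    rw [Lin, direction_affineSpan]
    exact vsub_mem_vectorSpan ℝ (hsa k) (hsb k)
  | zero => exact ⟨0, fun k => zero_mem _, tendsto_const_nhds⟩
  | add _ _ _ _ h₁ h₂ =>
    obtain ⟨s₁, hs₁, hs₁t⟩ := h₁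
    obtain ⟨s₂, hs₂, hs₂t⟩ := h₂
    exact ⟨s₁ + s₂, fun k => add_mem (hs₁ k) (hs₂ k), hs₁t.add hs₂t⟩
  | smul c _ _ h =>
    obtain ⟨s, hs, hst⟩ := h
    exact ⟨c • s, fun k => smul_mem _ c (hs k), hst.const_smul c⟩

theorem inner_sub_nonpos_of_tendsto (hA : LowerSCAlongAt A S x₀) (hxS : ∀ k, x k ∈ S)
    (hx : Tendsto x atTop (𝓝 x₀)) {u z : ℕ → E} {u₀ z₀ : E} (hu : Tendsto u atTop (𝓝 u₀))
    (hz : Tendsto z atTop (𝓝 z₀)) (hsep : ∀ k, ∀ w ∈ A (x k), ⟪z k, w - u k⟫ ≤ 0) :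
    ∀ w ∈ A x₀, ⟪z₀, w - u₀⟫ ≤ 0 := by
  intro w hw
  obtain ⟨s, hs, hst⟩ := hA w hw x hxS hx
  exact le_of_tendsto' (hz.inner (hst.sub hu)) fun k => hsep k _ (hs k)

end LowerSCAlongAt

namespace PartlySmoothAt

variable {p : ℕ∞} {F : Type*} [NormedAddCommGroup F] [InnerProductSpace ℝ F]
  {E : Type*} [NormedAddCommGroup E] [InnerProductSpace ℝ E] [FiniteDimensional ℝ E]
  {A : E → Set E} {M : Set E} {xbar : E} {P : CpPatch p F M xbar}

theorem lowerSCAlongAt (hA : PartlySmoothAt A M xbar P) : LowerSCAlongAt A M xbar := by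
  obtain ⟨-, -, -, -, W, hW, hlsc⟩ := hA
  exact hlsc xbar ⟨P.base_mem, mem_of_mem_nhds hW⟩

theorem eventually_convex (hA : PartlySmoothAt A M xbar P) :
    ∀ᶠ y in 𝓝 xbar, Convex ℝ (A y) := by
  obtain ⟨-, ⟨W, hW, hreg⟩, -⟩ := hA
  filter_upwards [hW] with y hy using (hreg y hy).2.2

theorem eventually_finrank_Lin_le (hA : PartlySmoothAt A M xbar P) :
    ∀ᶠ y in 𝓝 xbar, y ∈ M → finrank ℝ (Lin (A y)) ≤ finrank ℝ (Lin (A xbar)) := by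
  obtain ⟨-, -, hsharp, ⟨_, W, hW, -, hproj⟩, -⟩ := hA
  filter_upwards [hW] with y hyW hyM
  have hLin : Lin (A y) ≤ P.normal y := by
    refine direction_affineSpan_le_orthogonal_of_subsingleton ?_
    rw [hproj y ⟨hyM, hyW⟩]
    exact subsingleton_singleton
  calc finrank ℝ (Lin (A y)) ≤ finrank ℝ (P.normal y) := Submodule.finrank_mono hLin
    _ = finrank ℝ (P.normal xbar) := P.finrank_normal_eq hyM P.base_mem
    _ = finrank ℝ (Lin (A xbar)) := by rw [hsharp]

end PartlySmoothAt

theorem eventually_mem_intrinsicInterior_general {n d : ℕ} {p : ℕ∞}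
    (A : EuclideanSpace ℝ (Fin n) → Set (EuclideanSpace ℝ (Fin n))) (M : Set (EuclideanSpace ℝ (Fin n))) (xbar ubar : EuclideanSpace ℝ (Fin n))
    (P : CpPatch p (EuclideanSpace ℝ (Fin d)) M xbar)
    (hA : PartlySmoothAt A M xbar P)
    (hubar : ubar ∈ intrinsicInterior ℝ (A xbar))
    (x u : ℕ → EuclideanSpace ℝ (Fin n)) (hxM : ∀ k, x k ∈ M)
    (hx : Tendsto x atTop (𝓝 xbar))
    (hu : ∀ k, u k ∈ A (x k)) (huu : Tendsto u atTop (𝓝 ubar)) :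
    ∃ N : ℕ, ∀ k ≥ N, u k ∈ intrinsicInterior ℝ (A (x k)) := by
  refine eventually_atTop.1 ?_
  by_contra hbad
  have hgood : ∀ᶠ k in atTop, Convex ℝ (A (x k)) ∧
      finrank ℝ (Lin (A (x k))) ≤ finrank ℝ (Lin (A xbar)) :=
    (hx.eventually (hA.eventually_convex.and hA.eventually_finrank_Lin_le)).mono
      fun k hk => ⟨hk.1, hk.2 (hxM k)⟩
  obtain ⟨φ, hφ, hφbad⟩ :=
    extraction_of_frequently_atTop ((not_eventually.1 hbad).and_eventually hgood)
  choose z hzLin hznorm hzsep using fun j =>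
    exists_norm_eq_one_inner_sub_nonpos_of_notMem_intrinsicInterior (hφbad j).2.1 (hu (φ j))
      (hφbad j).1
  obtain ⟨z₀, hz₀, ψ, hψ, hzψ⟩ := (isCompact_sphere 0 1).tendsto_subseq (x := z) fun j => by
    simpa using hznorm j
  have hxψ : Tendsto (x ∘ φ ∘ ψ) atTop (𝓝 xbar) := hx.comp (hφ.comp hψ).tendsto_atTop
  have huψ : Tendsto (u ∘ φ ∘ ψ) atTop (𝓝 ubar) := huu.comp (hφ.comp hψ).tendsto_atTop
  have hz₀Lin : z₀ ∈ Lin (A xbar) :=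
    mem_of_tendsto_of_finrank_le (.of_forall fun j => (hφbad (ψ j)).2.2)
      (fun _ => hA.lowerSCAlongAt.exists_tendsto_mem_Lin (fun _ => hxM _) hxψ)
      (fun j => hzLin (ψ j)) hzψ
  have hz₀sep : ∀ w ∈ A xbar, ⟪z₀, w - ubar⟫ ≤ 0 :=
    hA.lowerSCAlongAt.inner_sub_nonpos_of_tendsto (fun _ => hxM _) hxψ huψ hzψ
      fun j => hzsep (ψ j)
  have hz₀zero := eq_zero_of_inner_sub_nonpos_of_mem_intrinsicInterior hubar hz₀Lin hz₀sep
  simp [hz₀zero] at hz₀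

/-- dual vectors converging to a relative interior point are
eventually in the relative interior. -/
theorem eventually_mem_intrinsicInterior {n d : ℕ} {p : ℕ∞} (hp : 1 ≤ p)
    (A : EuclideanSpace ℝ (Fin n) → Set (EuclideanSpace ℝ (Fin n))) (M : Set (EuclideanSpace ℝ (Fin n))) (xbar ubar : EuclideanSpace ℝ (Fin n))
    (P : CpPatch p (EuclideanSpace ℝ (Fin d)) M xbar)
    (hA : PartlySmoothAt A M xbar P)
    (hubar : ubar ∈ intrinsicInterior ℝ (A xbar))
    (x u : ℕ → EuclideanSpace ℝ (Fin n)) (hxM : ∀ k, x k ∈ M)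
    (hx : Tendsto x atTop (𝓝 xbar))
    (hu : ∀ k, u k ∈ A (x k)) (huu : Tendsto u atTop (𝓝 ubar)) :
    ∃ N : ℕ, ∀ k ≥ N, u k ∈ intrinsicInterior ℝ (A (x k)) :=
  eventually_mem_intrinsicInterior_general A M xbar ubar P hA hubar x u hxM hx hu huu
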